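/- arXiv:1009.1933 — 7 statements merged into one kernel-verified Lean document; each statement's English description precedes it below -/
import Mathlib

section
/- Let K be a field, n ≥ 2 an integer, and let c, z_1, …, z_n ∈ K be nonzero elements such that z_1, …, z_{n−1} are pairwise distinct and c·z_i ≠ z_j for all i, j ∈ {1,…,n}. For k = 1,…,n−1 set W_k = (∏_{1≤i≤n−1, i≠k} (z_n−z_i)/(z_k−z_i)) · (∏_{i=1}^{n−1} (z_k−c·z_i)/(z_n−c·z_i)). Then for every j ∈ {1,…,n−1} one has ∑_{k=1}^{n−1} W_k · 1/(1−c^{−1}z_k/z_j) = 1/(1−c^{−1}z_n/z_j). (Equivalently, the row vector (W_1,…,W_{n−1}) equals V_c·M_c^{−1}, where M_c is the (n−1)×(n−1) matrix with entries (M_c)_{kj} = 1/(1−c^{−1}z_k/z_j) and V_c is the row vector with entries (V_c)_j = 1/(1−c^{−1}z_n/z_j).) -/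
/-!
With `w = c z_j` the matrix entries are `1/(1 - c⁻¹ z_k / z_j) = w / (w - z_k)`. Since `w` is a
root of `∏ᵢ (X - c zᵢ)`, dividing out the factor `z_k - w` turns the claim into Lagrange
interpolation at the nodes `z_1, …, z_{n-1}`, evaluated at `z_n`, of `∏_{i ≠ j} (X - c zᵢ)`,
which is exact because this polynomial has degree `n - 2`.
-/

open Finset Polynomial Lagrange

theorem eval_eq_sum_lagrange_mul_eval {F ι : Type*} [Field F] [DecidableEq ι]
    {s : Finset ι} {v : ι → F} (hv : Set.InjOn v s) {f : F[X]} (hf : f.degree < #s) (x : F) :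
    f.eval x = ∑ k ∈ s, (∏ i ∈ s.erase k, (x - v i) / (v k - v i)) * f.eval (v k) := by
  conv_lhs => rw [eq_interpolate hv hf]
  rw [interpolate_apply, eval_finsetSum]
  refine sum_congr rfl fun k _ => ?_
  simp [Lagrange.basis, basisDivisor, eval_prod, div_eq_inv_mul, mul_comm]

theorem sum_lagrange_mul_prod_div_div_sub {K ι : Type*} [Field K] [DecidableEq ι]
    {s : Finset ι} {v u : ι → K} (hv : Set.InjOn v s) {j : ι} (hj : j ∈ s) {x : K}
    (hx : ∀ i ∈ s, x ≠ u i) (hvu : ∀ k ∈ s, v k ≠ u j) :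
    ∑ k ∈ s, (∏ i ∈ s.erase k, (x - v i) / (v k - v i)) *
        (∏ i ∈ s, (v k - u i) / (x - u i)) / (u j - v k)
      = 1 / (u j - x) := by
  set R := nodal (s.erase j) u
  have hR : R.eval x = ∑ k ∈ s, (∏ i ∈ s.erase k, (x - v i) / (v k - v i)) * R.eval (v k) :=
    eval_eq_sum_lagrange_mul_eval hv
      (by rw [degree_nodal]; exact_mod_cast card_erase_lt_of_mem hj) x
  have hprod (y : K) : ∏ i ∈ s, (y - u i) = (y - u j) * R.eval y := by
    rw [eval_nodal, mul_prod_erase s (fun i => y - u i) hj]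
  have hRx : R.eval x ≠ 0 := by
    rw [eval_nodal, prod_ne_zero_iff]
    exact fun i hi => sub_ne_zero.mpr (hx i (mem_of_mem_erase hi))
  have hxj : x - u j ≠ 0 := sub_ne_zero.mpr (hx j hj)
  have hjx : u j - x ≠ 0 := sub_ne_zero.mpr (hx j hj).symm
  calc _ = ∑ k ∈ s, (∏ i ∈ s.erase k, (x - v i) / (v k - v i)) * R.eval (v k) *
          (1 / ((u j - x) * R.eval x)) := by
        refine sum_congr rfl fun k hk => ?_
        have hvk : u j - v k ≠ 0 := sub_ne_zero.mpr (hvu k hk).symm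
        rw [prod_div_distrib (s := s), hprod, hprod]
        field_simp
        ring
    _ = 1 / (u j - x) := by
        rw [← sum_mul, ← hR]
        field_simp

theorem weight_function_VM_inverse_general
    (K : Type*) [Field K] (n : ℕ) (c : K) (z : ℕ → K)
    (hc : c ≠ 0)
    (hdist : ∀ i ∈ Icc 1 (n - 1), ∀ j ∈ Icc 1 (n - 1), i ≠ j → z i ≠ z j)
    (hcz : ∀ i ∈ Icc 1 n, ∀ j ∈ Icc 1 n, c * z i ≠ z j) :
    ∀ j ∈ Icc 1 (n - 1),
      ∑ k ∈ Icc 1 (n - 1),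
        ((∏ i ∈ (Icc 1 (n - 1)).erase k, (z n - z i) / (z k - z i)) *
          ∏ i ∈ Icc 1 (n - 1), (z k - c * z i) / (z n - c * z i)) *
        (1 / (1 - c⁻¹ * z k / z j))
      = 1 / (1 - c⁻¹ * z n / z j) := by
  intro j hj
  have hsub : ∀ i ∈ Icc 1 (n - 1), i ∈ Icc 1 n := fun i hi => by
    simp only [mem_Icc] at hi ⊢; omega
  have hn : n ∈ Icc 1 n := by simp only [mem_Icc] at hj ⊢; omega
  have hzj : z j ≠ 0 := fun h => hcz j (hsub j hj) j (hsub j hj) (by rw [h, mul_zero])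
  have hentry (y : K) : 1 / (1 - c⁻¹ * y / z j) = c * z j / (c * z j - y) := by
    rw [show 1 - c⁻¹ * y / z j = (c * z j - y) / (c * z j) by field_simp, one_div_div]
  have hinj : Set.InjOn z (Icc 1 (n - 1)) := fun a ha b hb hab =>
    by_contra fun hne => hdist a ha b hb hne hab
  have key := sum_lagrange_mul_prod_div_div_sub (u := fun i => c * z i) hinj hj
    (fun i hi => (hcz i (hsub i hi) n hn).symm)
    (fun k hk => (hcz j (hsub j hj) k (hsub k hk)).symm)
  simp only [hentry, div_eq_mul_one_div (c * z j), ← key, mul_sum]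
  exact sum_congr rfl fun k _ => by ring

/-- Khoroshkin–Shapiro, Proposition 6(a): the row vector `W = V_c · M_c⁻¹` for the
Cauchy-type matrix `M_c` with entries `1/(1 - c⁻¹ z_k / z_j)`. -/
theorem weight_function_VM_inverse
    (K : Type*) [Field K] (n : ℕ) (hn : 2 ≤ n) (c : K) (z : ℕ → K)
    (hc : c ≠ 0) (hz : ∀ i ∈ Icc 1 n, z i ≠ 0)
    (hdist : ∀ i ∈ Icc 1 (n - 1), ∀ j ∈ Icc 1 (n - 1), i ≠ j → z i ≠ z j)
    (hcz : ∀ i ∈ Icc 1 n, ∀ j ∈ Icc 1 n, c * z i ≠ z j) :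
    ∀ j ∈ Icc 1 (n - 1),
      ∑ k ∈ Icc 1 (n - 1),
        ((∏ i ∈ (Icc 1 (n - 1)).erase k, (z n - z i) / (z k - z i)) *
          ∏ i ∈ Icc 1 (n - 1), (z k - c * z i) / (z n - c * z i)) *
        (1 / (1 - c⁻¹ * z k / z j))
      = 1 / (1 - c⁻¹ * z n / z j) :=
  weight_function_VM_inverse_general K n c z hc hdist hcz
end

section
/- Let K be a field, n ≥ 2 an integer, and let q, z_1, …, z_n ∈ K be nonzero elements such that z_1, …, z_{n−1} are pairwise distinct, q²z_i ≠ z_j for all i, j ∈ {1,…,n}, and z_i + q·z_j ≠ 0 for all i, j ∈ {1,…,n}. Then for every k ∈ {1,…,n−1} one has λ_k(z_1,…,z_{n−1};z_n) = 1/(1+q·z_n/z_k) − ∑_{i=1}^{n−1} ρ_i(z_1,…,z_{n−1};z_n) · 1/(1+q·z_i/z_k). -/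
/-!
Put `w = -z_k/q`. Then `1/(1 + q c/z_k) = w/(w - c)` and
`(z_k + q³ c)/(z_k + q c) = (w - q² c)/(w - c)`, so the identity becomes Lagrange
interpolation of `f(X) = ∏_m (X - q² z_m)`, of degree `n - 1`, on the `n` nodes
`w, z_1, …, z_{n-1}`, evaluated at `z_n` and divided by `f(z_n)`: the node `w` contributes
`λ_k`, and the node `z_i` contributes `ρ_i · w/(w - z_i)`.
-/

open Finset Polynomial

namespace Lagrange
variable {F ι : Type*} [Field F] [DecidableEq ι] {s : Finset ι} {v : ι → F}

theorem eval_eq_sum_eval_mul_prod_div (hvs : Set.InjOn v s) {f : F[X]} (hf : f.degree < #s)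
    (t : F) : f.eval t = ∑ i ∈ s, f.eval (v i) * ∏ j ∈ s.erase i, (t - v j) / (v i - v j) := by
  conv_lhs => rw [eq_interpolate hvs hf]
  simp [interpolate_apply, eval_finsetSum, Lagrange.basis, basisDivisor, eval_prod, div_eq_inv_mul,
    mul_comm]

theorem eval_eq_sum_with_extra_node (hvs : Set.InjOn v s) {x : F} (hx : ∀ i ∈ s, v i ≠ x) {f : F[X]}
    (hf : f.degree ≤ #s) (t : F) :
    f.eval t = f.eval x * ∏ j ∈ s, (t - v j) / (x - v j) +
      ∑ i ∈ s, f.eval (v i) * ((t - x) / (v i - x) * ∏ j ∈ s.erase i, (t - v j) / (v i - v j)) := by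
  have hinj : Set.InjOn (fun o : Option ι => o.elim x v) (insertNone s) := by
    rintro (_ | i) hi (_ | j) hj hij
    all_goals simp_all [eq_comm, hvs.eq_iff]
  have hdeg : f.degree < #(insertNone s) := by
    rw [card_insertNone]; exact hf.trans_lt (by exact_mod_cast Nat.lt_succ_self _)
  have herase_none : (insertNone s).erase none = s.map Function.Embedding.some := by
    ext (_ | _) <;> simp
  have herase_some (i : ι) : (insertNone s).erase (some i) = insertNone (s.erase i) := by
    ext (_ | _) <;> simp
  rw [eval_eq_sum_eval_mul_prod_div hinj hdeg t, sum_insertNone, herase_none, prod_map]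
  refine congrArg₂ (· + ·) rfl (sum_congr rfl fun i _ => ?_)
  rw [herase_some, prod_insertNone]
  rfl

end Lagrange

section
variable {K ι : Type*} [Field K] [DecidableEq ι]

/-- `ρ_i(v_1,…;t)` of the paper, with `p = q²` and `t = z_n`. -/
def rho (p t : K) (s : Finset ι) (v : ι → K) (i : ι) : K :=
  (∏ m ∈ s.erase i, (t - v m) / (v i - v m)) * ∏ m ∈ s, (v i - p * v m) / (t - p * v m)

theorem div_mul_prod_eq_div_sub_sum_rho {s : Finset ι} {v : ι → K} (hvs : Set.InjOn v s)
    {p t x : K} (hx : ∀ i ∈ s, v i ≠ x) (hxt : x ≠ t) (ht : ∀ i ∈ s, t ≠ p * v i) :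
    x / (x - t) * ∏ i ∈ s, ((t - v i) * (x - p * v i)) / ((x - v i) * (t - p * v i))
      = x / (x - t) - ∑ i ∈ s, rho p t s v i * (x / (x - v i)) := by
  set f : K[X] := Lagrange.nodal s (p * v ·)
  have hf_eval (y : K) : f.eval y = ∏ m ∈ s, (y - p * v m) := Lagrange.eval_nodal
  have hft : f.eval t ≠ 0 := by
    rw [hf_eval]; exact prod_ne_zero_iff.mpr fun m hm => sub_ne_zero.mpr (ht m hm)
  have hxt' : x - t ≠ 0 := sub_ne_zero.mpr hxt
  have hterm (i : ι) (hi : i ∈ s) : rho p t s v i * (x / (x - v i)) = x / ((x - t) * f.eval t) *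
      (f.eval (v i) * ((t - x) / (v i - x) * ∏ j ∈ s.erase i, (t - v j) / (v i - v j))) := by
    have hxi : v i - x ≠ 0 := sub_ne_zero.mpr (hx i hi)
    have hxi' : x - v i ≠ 0 := sub_ne_zero.mpr (hx i hi).symm
    rw [rho, prod_div_distrib (s := s), ← hf_eval, ← hf_eval]
    field_simp
    ring
  have hsum := Lagrange.eval_eq_sum_with_extra_node hvs hx (f := f)
    Lagrange.degree_nodal.le t
  simp only [mul_div_mul_comm, prod_mul_distrib, prod_div_distrib (s := s) (f := (x - p * v ·)),
    ← hf_eval]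
  rw [sum_congr rfl hterm, ← mul_sum, eq_sub_of_add_eq' hsum.symm]
  field_simp
  ring
end

theorem weight_function_lambda_identity_general
    (K : Type*) [Field K] (n : ℕ) (q : K) (z : ℕ → K)
    (hq : q ≠ 0) (hz : ∀ i ∈ Icc 1 n, z i ≠ 0)
    (hdist : ∀ i ∈ Icc 1 (n - 1), ∀ j ∈ Icc 1 (n - 1), i ≠ j → z i ≠ z j)
    (hq2 : ∀ i ∈ Icc 1 n, ∀ j ∈ Icc 1 n, q ^ 2 * z i ≠ z j)
    (hq1 : ∀ i ∈ Icc 1 n, ∀ j ∈ Icc 1 n, z i + q * z j ≠ 0) :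
    ∀ k ∈ Icc 1 (n - 1),
      z k / (q * z n + z k) *
        ∏ i ∈ Icc 1 (n - 1),
          ((z n - z i) * (z k + q ^ 3 * z i)) / ((z k + q * z i) * (z n - q ^ 2 * z i))
      = 1 / (1 + q * z n / z k)
        - ∑ i ∈ Icc 1 (n - 1),
            ((∏ m ∈ (Icc 1 (n - 1)).erase i, (z n - z m) / (z i - z m)) *
              ∏ m ∈ Icc 1 (n - 1), (z i - q ^ 2 * z m) / (z n - q ^ 2 * z m)) *
            (1 / (1 + q * z i / z k)) := by
  intro k hk
  have hsub : Icc 1 (n - 1) ⊆ Icc 1 n := Icc_subset_Icc_right (Nat.sub_le n 1)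
  have hn_mem : n ∈ Icc 1 n := by simp only [mem_Icc] at hk ⊢; omega
  have hzk : z k ≠ 0 := hz k (hsub hk)
  set w := -z k / q
  have hshift (c : K) : z k + q * c = -q * (w - c) := by simp only [w]; field_simp; ring
  have hratio (c : K) : 1 / (1 + q * c / z k) = z k / (z k + q * c) := by
    rw [one_add_div hzk, one_div_div]
  have hlambda (c : K) : z k / (z k + q * c) = w / (w - c) := by
    rw [hshift, show z k = -q * w by simp only [w]; field_simp,
      mul_div_mul_left _ _ (neg_ne_zero.mpr hq)]
  have hfactor (c : K) : ((z n - c) * (z k + q ^ 3 * c)) / ((z k + q * c) * (z n - q ^ 2 * c))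
      = ((z n - c) * (w - q ^ 2 * c)) / ((w - c) * (z n - q ^ 2 * c)) := by
    rw [hshift, show z k + q ^ 3 * c = -q * (w - q ^ 2 * c) by simp only [w]; field_simp; ring,
      mul_left_comm, mul_assoc, mul_div_mul_left _ _ (neg_ne_zero.mpr hq)]
  have hw (c : K) (hc : z k + q * c ≠ 0) : c ≠ w := by
    rintro rfl
    exact hc (by rw [hshift, sub_self, mul_zero])
  rw [add_comm (q * z n), hlambda]
  simp only [hratio, hlambda, hfactor]
  exact div_mul_prod_eq_div_sub_sum_rho
    (fun i hi j hj hij => by_contra fun h => hdist i hi j hj h hij)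
    (fun i hi => hw _ (hq1 k (hsub hk) i (hsub hi))) (hw _ (hq1 k (hsub hk) n hn_mem)).symm
    (fun i hi => (hq2 i (hsub hi) n hn_mem).symm)

/-- Khoroshkin–Shapiro, Proposition 6(b), equation (la1): the coefficient function
`λ_k(z_1,…,z_{n-1};z_n)` equals `1/(1+q z_n/z_k) - ∑_i ρ_i · 1/(1+q z_i/z_k)`. -/
theorem weight_function_lambda_identity
    (K : Type*) [Field K] (n : ℕ) (hn : 2 ≤ n) (q : K) (z : ℕ → K)
    (hq : q ≠ 0) (hz : ∀ i ∈ Icc 1 n, z i ≠ 0)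
    (hdist : ∀ i ∈ Icc 1 (n - 1), ∀ j ∈ Icc 1 (n - 1), i ≠ j → z i ≠ z j)
    (hq2 : ∀ i ∈ Icc 1 n, ∀ j ∈ Icc 1 n, q ^ 2 * z i ≠ z j)
    (hq1 : ∀ i ∈ Icc 1 n, ∀ j ∈ Icc 1 n, z i + q * z j ≠ 0) :
    ∀ k ∈ Icc 1 (n - 1),
      z k / (q * z n + z k) *
        ∏ i ∈ Icc 1 (n - 1),
          ((z n - z i) * (z k + q ^ 3 * z i)) / ((z k + q * z i) * (z n - q ^ 2 * z i))
      = 1 / (1 + q * z n / z k)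
        - ∑ i ∈ Icc 1 (n - 1),
            ((∏ m ∈ (Icc 1 (n - 1)).erase i, (z n - z m) / (z i - z m)) *
              ∏ m ∈ Icc 1 (n - 1), (z i - q ^ 2 * z m) / (z n - q ^ 2 * z m)) *
            (1 / (1 + q * z i / z k)) :=
  weight_function_lambda_identity_general K n q z hq hz hdist hq2 hq1
end

section
/- Let K be a field, n ≥ 2 an integer, and let q, z_1, …, z_n ∈ K be nonzero elements such that z_1, …, z_{n−1} are pairwise distinct and, for all i, j ∈ {1,…,n}: q²z_i ≠ z_j, z_i + q·z_j ≠ 0, and z_i + q³·z_j ≠ 0. Then for every j ∈ {1,…,n−1} one has ∑_{k=1}^{n−1} μ_k(z_1,…,z_{n−1};z_n) · 1/(1−q^{−2}z_k/z_j) + ∑_{k=1}^{n−1} ν_k(z_1,…,z_{n−1};z_n) · 1/(1+q^{−1}z_k/z_j) = 1/(1−q^{−2}z_n/z_j). -/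
open Finset

/-- The coefficient function `μ_k(z_1,…,z_{n-1};t)` of Khoroshkin–Shapiro. -/
noncomputable def muKS {K : Type*} [Field K] (n : ℕ) (q : K) (z : ℕ → K) (k : ℕ) (t : K) : K :=
  (∏ i ∈ (Icc 1 (n - 1)).erase k, (t - z i) / (z k - z i)) *
    ∏ i ∈ Icc 1 (n - 1),
      ((t + q * z i) * (z k - q ^ 2 * z i) * (z k + q ^ 3 * z i)) /
        ((z k + q * z i) * (t - q ^ 2 * z i) * (t + q ^ 3 * z i))

/-- The coefficient function `ν_k(z_1,…,z_{n-1};t)` of Khoroshkin–Shapiro. -/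
noncomputable def nuKS {K : Type*} [Field K] (n : ℕ) (q : K) (z : ℕ → K) (k : ℕ) (t : K) : K :=
  -q ^ n * (∏ i ∈ (Icc 1 (n - 1)).erase k, (t + q * z i) / (z k - z i)) *
    ∏ i ∈ Icc 1 (n - 1),
      ((t - z i) * (z k + q * z i) * (z k - q ^ 2 * z i)) /
        ((q * z k + z i) * (t - q ^ 2 * z i) * (t + q ^ 3 * z i))

/-!
Every term of the identity is a residue of one rational function. With `t = z_n`, put
`F(x) = P(x) / (∏ᵢ (x - zᵢ)(x + q zᵢ) · (x - t))`, where
`P(x) = c ∏_{i ≠ j} (x - q² zᵢ) ∏ᵢ (x + q³ zᵢ)` and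
`c = q² z_j ∏ᵢ (t - zᵢ)(t + q zᵢ) / ((t - q² zᵢ)(t + q³ zᵢ))`.
The numerator has degree two less than the denominator, so the residues of `F` sum to zero
(the top Lagrange interpolation coefficient of `P` vanishes). The residues at `zₖ` and `-q zₖ`
are the `k`-th terms of the two sums and the residue at `t` is minus the right-hand side.
If `t` coincides with some `z_m` the poles collide, but then `μₖ = δₖₘ` and `νₖ = 0` directly.
-/

open Polynomial

theorem Lagrange.sum_eval_div_prod_sub_eq_zero {F ι : Type*} [Field F] [DecidableEq ι]
    {s : Finset ι} {v : ι → F} (hvs : Set.InjOn v s) {P : F[X]} (hP : P.degree < ↑(#s - 1)) :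
    ∑ i ∈ s, P.eval (v i) / ∏ j ∈ s.erase i, (v i - v j) = 0 := by
  rw [← coeff_eq_sum hvs (hP.trans_le (by exact_mod_cast Nat.sub_le _ _)),
    coeff_eq_zero_of_degree_lt hP]

theorem Finset.erase_inl_disjSum {α β : Type*} [DecidableEq α] [DecidableEq β]
    (s : Finset α) (t : Finset β) (a : α) :
    (s.disjSum t).erase (.inl a) = (s.erase a).disjSum t := by
  ext (x | x) <;> simp

theorem Finset.erase_inr_disjSum {α β : Type*} [DecidableEq α] [DecidableEq β]
    (s : Finset α) (t : Finset β) (b : β) :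
    (s.disjSum t).erase (.inr b) = s.disjSum (t.erase b) := by
  ext (x | x) <;> simp

theorem Finset.prod_eq_pow_card_mul_prod {ι M : Type*} [CommMonoid M] {s : Finset ι}
    {f g : ι → M} {c : M} (h : ∀ i ∈ s, f i = c * g i) : ∏ i ∈ s, f i = c ^ #s * ∏ i ∈ s, g i :=
  (prod_congr rfl h).trans pow_card_mul_prod.symm

theorem sum_residues_two_families_add_point {F ι : Type*} [Field F] [DecidableEq ι]
    {s : Finset ι} {a b : ι → F} {t : F}
    (ha : Set.InjOn a s) (hb : Set.InjOn b s) (hab : ∀ k ∈ s, ∀ l ∈ s, a k ≠ b l)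
    (hat : ∀ k ∈ s, a k ≠ t) (hbt : ∀ k ∈ s, b k ≠ t) {P : F[X]} (hP : P.degree < ↑(2 * #s)) :
    ∑ k ∈ s, P.eval (a k) / ((∏ l ∈ s.erase k, (a k - a l)) * (∏ l ∈ s, (a k - b l)) * (a k - t)) +
    ∑ k ∈ s, P.eval (b k) / ((∏ l ∈ s, (b k - a l)) * (∏ l ∈ s.erase k, (b k - b l)) * (b k - t)) +
    P.eval t / ((∏ l ∈ s, (t - a l)) * ∏ l ∈ s, (t - b l)) = 0 := by
  set v : ι ⊕ ι ⊕ Unit → F := Sum.elim a (Sum.elim b fun _ ↦ t)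
  have hv : Set.InjOn v (s.disjSum (s.disjSum {()})) := by
    rintro (k | k | ⟨⟩) hk (l | l | ⟨⟩) hl hkl <;>
      simp only [SetLike.mem_coe, inl_mem_disjSum, inr_mem_disjSum, mem_singleton, Sum.elim_inl,
        Sum.elim_inr, Sum.inl.injEq, Sum.inr.injEq, v] at hk hl hkl ⊢ <;>
      grind [Set.InjOn]
  have := Lagrange.sum_eval_div_prod_sub_eq_zero hv (P := P) (by
    rwa [card_disjSum, card_disjSum, card_singleton, show #s + (#s + 1) - 1 = 2 * #s by omega])
  simpa [sum_disjSum, prod_disjSum, erase_inl_disjSum, erase_inr_disjSum, v, mul_assoc,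
    add_assoc] using this

namespace KhoroshkinShapiro

variable {K : Type*} [Field K]

theorem one_div_one_sub_inv_sq_mul_div {q w : K} (x : K) (hq : q ≠ 0) (hw : w ≠ 0) :
    1 / (1 - (q ^ 2)⁻¹ * x / w) = q ^ 2 * w / (q ^ 2 * w - x) := by
  rw [inv_mul_eq_div, div_div, one_sub_div (by positivity), one_div_div]

theorem one_div_one_add_inv_mul_div {q w : K} (x : K) (hq : q ≠ 0) (hw : w ≠ 0) :
    1 / (1 + q⁻¹ * x / w) = q * w / (q * w + x) := by
  rw [inv_mul_eq_div, div_div, one_add_div (by positivity), one_div_div]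

-- `t = z m` is allowed, so that the degenerate case of the theorem can use these conditions too.
structure GeneralPosition (n : ℕ) (q : K) (z : ℕ → K) (t : K) : Prop where
  q_ne_zero : q ≠ 0
  injOn : Set.InjOn z (Icc 1 (n - 1))
  node_add_mul_ne_zero : ∀ i ∈ Icc 1 (n - 1), ∀ k ∈ Icc 1 (n - 1), z k + q * z i ≠ 0
  node_sub_sq_mul_ne_zero : ∀ i ∈ Icc 1 (n - 1), ∀ k ∈ Icc 1 (n - 1), z k - q ^ 2 * z i ≠ 0
  add_mul_ne_zero : ∀ i ∈ Icc 1 (n - 1), t + q * z i ≠ 0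
  sub_sq_mul_ne_zero : ∀ i ∈ Icc 1 (n - 1), t - q ^ 2 * z i ≠ 0
  add_cube_mul_ne_zero : ∀ i ∈ Icc 1 (n - 1), t + q ^ 3 * z i ≠ 0

noncomputable def residueNumerator (n : ℕ) (q : K) (z : ℕ → K) (j : ℕ) (t : K) : K[X] :=
  C (q ^ 2 * z j * ∏ i ∈ Icc 1 (n - 1),
      (t - z i) * (t + q * z i) / ((t - q ^ 2 * z i) * (t + q ^ 3 * z i))) *
    (Lagrange.nodal ((Icc 1 (n - 1)).erase j) (fun i ↦ q ^ 2 * z i) *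
      Lagrange.nodal (Icc 1 (n - 1)) (fun i ↦ -(q ^ 3 * z i)))

variable {n : ℕ} {q : K} {z : ℕ → K} {t : K} {j : ℕ}

theorem eval_residueNumerator (x : K) :
    (residueNumerator n q z j t).eval x =
      q ^ 2 * z j * (∏ i ∈ Icc 1 (n - 1), (t - z i) * (t + q * z i) /
        ((t - q ^ 2 * z i) * (t + q ^ 3 * z i))) *
      ((∏ i ∈ (Icc 1 (n - 1)).erase j, (x - q ^ 2 * z i)) *
        ∏ i ∈ Icc 1 (n - 1), (x + q ^ 3 * z i)) := by
  simp [residueNumerator, Lagrange.eval_nodal]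

theorem degree_residueNumerator_lt (hj : j ∈ Icc 1 (n - 1)) :
    (residueNumerator n q z j t).degree < ↑(2 * #(Icc 1 (n - 1))) := by
  have hpos : 0 < #(Icc 1 (n - 1)) := card_pos.2 ⟨j, hj⟩
  have : (residueNumerator n q z j t).natDegree < 2 * #(Icc 1 (n - 1)) := by
    refine (natDegree_C_mul_le _ _).trans_lt ((natDegree_mul_le).trans_lt ?_)
    rw [Lagrange.natDegree_nodal, Lagrange.natDegree_nodal, card_erase_of_mem hj]
    omega
  exact degree_le_natDegree.trans_lt (by exact_mod_cast this)

theorem muKS_at_node_of_ne {k m : ℕ} (hm : m ∈ Icc 1 (n - 1)) (hkm : k ≠ m) :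
    muKS n q z k (z m) = 0 := by
  rw [muKS, prod_eq_zero (mem_erase.2 ⟨hkm.symm, hm⟩) (by simp), zero_mul]

theorem nuKS_at_node {k m : ℕ} (hm : m ∈ Icc 1 (n - 1)) : nuKS n q z k (z m) = 0 := by
  rw [nuKS, prod_eq_zero hm (by simp), mul_zero]

theorem sum_nuKS_at_node_mul {m : ℕ} (hm : m ∈ Icc 1 (n - 1)) (f : ℕ → K) :
    ∑ k ∈ Icc 1 (n - 1), nuKS n q z k (z m) * f k = 0 :=
  sum_eq_zero fun _ _ ↦ by rw [nuKS_at_node hm, zero_mul]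

namespace GeneralPosition

theorem ne_zero (h : GeneralPosition n q z t) (hj : j ∈ Icc 1 (n - 1)) : z j ≠ 0 := fun h0 ↦
  h.node_sub_sq_mul_ne_zero j hj j hj (by simp [h0])

theorem prod_erase_sub_ne_zero (h : GeneralPosition n q z t) {k : ℕ} (hk : k ∈ Icc 1 (n - 1)) :
    ∏ l ∈ (Icc 1 (n - 1)).erase k, (z k - z l) ≠ 0 :=
  prod_ne_zero_iff.2 fun _ hl ↦ sub_ne_zero.2 fun e ↦
    ne_of_mem_erase hl (h.injOn (mem_of_mem_erase hl) hk e.symm)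

theorem muKS_mul_eq_residue (h : GeneralPosition n q z t) (ht : ∀ i ∈ Icc 1 (n - 1), t ≠ z i)
    {k : ℕ} (hj : j ∈ Icc 1 (n - 1)) (hk : k ∈ Icc 1 (n - 1)) :
    muKS n q z k t * (1 / (1 - (q ^ 2)⁻¹ * z k / z j)) =
      (residueNumerator n q z j t).eval (z k) /
        ((∏ l ∈ (Icc 1 (n - 1)).erase k, (z k - z l)) * (∏ l ∈ Icc 1 (n - 1), (z k + q * z l)) *
          (z k - t)) := by
  rw [one_div_one_sub_inv_sq_mul_div _ h.q_ne_zero (h.ne_zero hj), eval_residueNumerator, muKS]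
  have hkj : q ^ 2 * z j - z k ≠ 0 := by
    rw [← neg_sub]; exact neg_ne_zero.2 (h.node_sub_sq_mul_ne_zero j hj k hk)
  have htk : t - z k ≠ 0 := sub_ne_zero.2 (ht k hk)
  have hkt : z k - t ≠ 0 := sub_ne_zero.2 (ht k hk).symm
  have hzz : ∏ l ∈ (Icc 1 (n - 1)).erase k, (z k - z l) ≠ 0 := h.prod_erase_sub_ne_zero hk
  have hzq : ∏ l ∈ Icc 1 (n - 1), (z k + q * z l) ≠ 0 :=
    prod_ne_zero_iff.2 fun l hl ↦ h.node_add_mul_ne_zero l hl k hk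
  have htq2 : ∏ l ∈ Icc 1 (n - 1), (t - q ^ 2 * z l) ≠ 0 := prod_ne_zero_iff.2 h.sub_sq_mul_ne_zero
  have htq3 : ∏ l ∈ Icc 1 (n - 1), (t + q ^ 3 * z l) ≠ 0 := prod_ne_zero_iff.2 h.add_cube_mul_ne_zero
  simp only [prod_div_distrib, prod_mul_distrib]
  rw [← mul_prod_erase _ (fun i ↦ t - z i) hk, ← mul_prod_erase _ (fun i ↦ z k - q ^ 2 * z i) hj]
  field_simp
  ring

theorem nuKS_mul_eq_residue (h : GeneralPosition n q z t) {k : ℕ} (hj : j ∈ Icc 1 (n - 1))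
    (hk : k ∈ Icc 1 (n - 1)) :
    nuKS n q z k t * (1 / (1 + q⁻¹ * z k / z j)) =
      (residueNumerator n q z j t).eval (-(q * z k)) /
        ((∏ l ∈ Icc 1 (n - 1), (-(q * z k) - z l)) *
          (∏ l ∈ (Icc 1 (n - 1)).erase k, (-(q * z k) + q * z l)) * (-(q * z k) - t)) := by
  rw [one_div_one_add_inv_mul_div _ h.q_ne_zero (h.ne_zero hj), eval_residueNumerator, nuKS]
  set E := Icc 1 (n - 1)
  have hkj : q * z j + z k ≠ 0 := by rw [add_comm]; exact h.node_add_mul_ne_zero j hj k hk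
  have htk : t + q * z k ≠ 0 := h.add_mul_ne_zero k hk
  have hkt : -(q * z k) - t ≠ 0 := by rw [← neg_add', add_comm]; exact neg_ne_zero.2 htk
  have hzz : ∏ l ∈ E.erase k, (z k - z l) ≠ 0 := h.prod_erase_sub_ne_zero hk
  have hzq : ∏ l ∈ E, (q * z k + z l) ≠ 0 :=
    prod_ne_zero_iff.2 fun l hl ↦ by rw [add_comm]; exact h.node_add_mul_ne_zero k hk l hl
  have htq2 : ∏ l ∈ E, (t - q ^ 2 * z l) ≠ 0 := prod_ne_zero_iff.2 h.sub_sq_mul_ne_zero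
  have htq3 : ∏ l ∈ E, (t + q ^ 3 * z l) ≠ 0 := prod_ne_zero_iff.2 h.add_cube_mul_ne_zero
  have hn : q ^ n = q ^ #E * q := by
    rw [← pow_succ, Nat.card_Icc]
    congr 1
    have := mem_Icc.1 hj
    omega
  have ea : ∏ l ∈ E, (-(q * z k) - z l) = (-1) ^ #E * ∏ l ∈ E, (q * z k + z l) :=
    prod_eq_pow_card_mul_prod fun _ _ ↦ by ring
  have eb : ∏ l ∈ E.erase k, (-(q * z k) + q * z l) =
      (-q) ^ #(E.erase k) * ∏ l ∈ E.erase k, (z k - z l) :=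
    prod_eq_pow_card_mul_prod fun _ _ ↦ by ring
  have ePa : ∏ l ∈ E.erase j, (-(q * z k) - q ^ 2 * z l) =
      (-q) ^ #(E.erase j) * ∏ l ∈ E.erase j, (z k + q * z l) :=
    prod_eq_pow_card_mul_prod fun _ _ ↦ by ring
  have ePb : ∏ l ∈ E, (-(q * z k) + q ^ 3 * z l) = (-q) ^ #E * ∏ l ∈ E, (z k - q ^ 2 * z l) :=
    prod_eq_pow_card_mul_prod fun _ _ ↦ by ring
  rw [hn, ea, eb, ePa, ePb, neg_pow q #E, card_erase_of_mem hj, card_erase_of_mem hk]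
  have hqm : (-q) ^ (#E - 1) ≠ 0 := pow_ne_zero _ (neg_ne_zero.2 h.q_ne_zero)
  simp only [prod_div_distrib, prod_mul_distrib]
  rw [← mul_prod_erase _ (fun i ↦ t + q * z i) hk, ← mul_prod_erase _ (fun i ↦ z k + q * z i) hj]
  field_simp
  ring

theorem one_div_eq_neg_residue (h : GeneralPosition n q z t)
    (ht : ∀ i ∈ Icc 1 (n - 1), t ≠ z i) (hj : j ∈ Icc 1 (n - 1)) :
    1 / (1 - (q ^ 2)⁻¹ * t / z j) =
      -((residueNumerator n q z j t).eval t /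
        ((∏ l ∈ Icc 1 (n - 1), (t - z l)) * ∏ l ∈ Icc 1 (n - 1), (t + q * z l))) := by
  have htqj := h.sub_sq_mul_ne_zero j hj
  have hqjt : q ^ 2 * z j - t ≠ 0 := by rw [← neg_sub]; exact neg_ne_zero.2 htqj
  have htz : ∏ l ∈ Icc 1 (n - 1), (t - z l) ≠ 0 :=
    prod_ne_zero_iff.2 fun l hl ↦ sub_ne_zero.2 (ht l hl)
  have hzq : ∏ l ∈ Icc 1 (n - 1), (t + q * z l) ≠ 0 := prod_ne_zero_iff.2 h.add_mul_ne_zero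
  have htq2 : ∏ l ∈ (Icc 1 (n - 1)).erase j, (t - q ^ 2 * z l) ≠ 0 :=
    prod_ne_zero_iff.2 fun l hl ↦ h.sub_sq_mul_ne_zero l (mem_of_mem_erase hl)
  have htq3 : ∏ l ∈ Icc 1 (n - 1), (t + q ^ 3 * z l) ≠ 0 := prod_ne_zero_iff.2 h.add_cube_mul_ne_zero
  rw [one_div_one_sub_inv_sq_mul_div _ h.q_ne_zero (h.ne_zero hj), eval_residueNumerator]
  simp only [prod_div_distrib, prod_mul_distrib]
  rw [← mul_prod_erase _ (fun i ↦ t - q ^ 2 * z i) hj]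
  field_simp
  ring

theorem sum_residues_eq_zero (h : GeneralPosition n q z t) (ht : ∀ i ∈ Icc 1 (n - 1), t ≠ z i)
    (hj : j ∈ Icc 1 (n - 1)) :
    ∑ k ∈ Icc 1 (n - 1), (residueNumerator n q z j t).eval (z k) /
        ((∏ l ∈ (Icc 1 (n - 1)).erase k, (z k - z l)) * (∏ l ∈ Icc 1 (n - 1), (z k + q * z l)) *
          (z k - t)) +
      ∑ k ∈ Icc 1 (n - 1), (residueNumerator n q z j t).eval (-(q * z k)) /
        ((∏ l ∈ Icc 1 (n - 1), (-(q * z k) - z l)) *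
          (∏ l ∈ (Icc 1 (n - 1)).erase k, (-(q * z k) + q * z l)) * (-(q * z k) - t)) +
      (residueNumerator n q z j t).eval t /
        ((∏ l ∈ Icc 1 (n - 1), (t - z l)) * ∏ l ∈ Icc 1 (n - 1), (t + q * z l)) = 0 := by
  simpa only [sub_neg_eq_add] using sum_residues_two_families_add_point (b := fun i ↦ -(q * z i))
    h.injOn (fun k hk l hl e ↦ h.injOn hk hl (mul_left_cancel₀ h.q_ne_zero (neg_inj.1 e)))
    (fun k hk l hl e ↦ h.node_add_mul_ne_zero l hl k hk (by rw [e]; ring))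
    (fun k hk e ↦ ht k hk e.symm) (fun k hk e ↦ h.add_mul_ne_zero k hk (by rw [← e]; ring))
    (degree_residueNumerator_lt hj)

theorem muKS_at_own_node {m : ℕ} (h : GeneralPosition n q z (z m)) (hm : m ∈ Icc 1 (n - 1)) :
    muKS n q z m (z m) = 1 := by
  rw [muKS, prod_eq_one, prod_eq_one, one_mul]
  · intro i hi
    exact div_self (mul_ne_zero (mul_ne_zero (h.node_add_mul_ne_zero i hi m hm)
      (h.node_sub_sq_mul_ne_zero i hi m hm)) (h.add_cube_mul_ne_zero i hi))
  · intro i hi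
    exact div_self (prod_ne_zero_iff.1 (h.prod_erase_sub_ne_zero hm) i hi)

theorem sum_muKS_at_node_mul {m : ℕ} (h : GeneralPosition n q z (z m))
    (hm : m ∈ Icc 1 (n - 1)) (f : ℕ → K) :
    ∑ k ∈ Icc 1 (n - 1), muKS n q z k (z m) * f k = f m := by
  rw [sum_eq_single_of_mem m hm fun k _ hkm ↦ by rw [muKS_at_node_of_ne hm hkm, zero_mul],
    h.muKS_at_own_node hm, one_mul]

end GeneralPosition

end KhoroshkinShapiro

open KhoroshkinShapiro in
theorem weight_function_munu_first_columns_general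
    (K : Type*) [Field K] (n : ℕ) (q : K) (z : ℕ → K)
    (hq : q ≠ 0)
    (hdist : ∀ i ∈ Icc 1 (n - 1), ∀ j ∈ Icc 1 (n - 1), i ≠ j → z i ≠ z j)
    (hq2 : ∀ i ∈ Icc 1 n, ∀ j ∈ Icc 1 n, q ^ 2 * z i ≠ z j)
    (hq1 : ∀ i ∈ Icc 1 n, ∀ j ∈ Icc 1 n, z i + q * z j ≠ 0)
    (hq3 : ∀ i ∈ Icc 1 n, ∀ j ∈ Icc 1 n, z i + q ^ 3 * z j ≠ 0) :
    ∀ j ∈ Icc 1 (n - 1),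
      (∑ k ∈ Icc 1 (n - 1), muKS n q z k (z n) * (1 / (1 - (q ^ 2)⁻¹ * z k / z j))) +
      (∑ k ∈ Icc 1 (n - 1), nuKS n q z k (z n) * (1 / (1 + q⁻¹ * z k / z j)))
      = 1 / (1 - (q ^ 2)⁻¹ * z n / z j) := by
  intro j hj
  have hE {i : ℕ} (hi : i ∈ Icc 1 (n - 1)) : i ∈ Icc 1 n := Icc_subset_Icc_right (n.sub_le 1) hi
  have hn : n ∈ Icc 1 n := right_mem_Icc.2 (by have := mem_Icc.1 hj; omega)
  have h : GeneralPosition n q z (z n) :=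
    ⟨hq, fun i hi k hk e ↦ by_contra fun hik ↦ hdist i hi k hk hik e,
      fun i hi k hk ↦ hq1 k (hE hk) i (hE hi),
      fun i hi k hk ↦ sub_ne_zero.2 (hq2 i (hE hi) k (hE hk)).symm,
      fun i hi ↦ hq1 n hn i (hE hi), fun i hi ↦ sub_ne_zero.2 (hq2 i (hE hi) n hn).symm,
      fun i hi ↦ hq3 n hn i (hE hi)⟩
  by_cases hdeg : ∃ m ∈ Icc 1 (n - 1), z n = z m
  · obtain ⟨m, hm, hzm⟩ := hdeg
    rw [hzm] at h ⊢
    rw [h.sum_muKS_at_node_mul hm, sum_nuKS_at_node_mul hm, add_zero]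
  · push Not at hdeg
    rw [sum_congr rfl fun k hk ↦ h.muKS_mul_eq_residue hdeg hj hk,
      sum_congr rfl fun k hk ↦ h.nuKS_mul_eq_residue hj hk, h.one_div_eq_neg_residue hdeg hj]
    linear_combination h.sum_residues_eq_zero hdeg hj

/-- Khoroshkin–Shapiro, Proposition 8, first family of columns of the linear system
`(μ,ν)·M = (V_{q²}, V_{-q³})`. -/
theorem weight_function_munu_first_columns
    (K : Type*) [Field K] (n : ℕ) (hn : 2 ≤ n) (q : K) (z : ℕ → K)
    (hq : q ≠ 0) (hz : ∀ i ∈ Icc 1 n, z i ≠ 0)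
    (hdist : ∀ i ∈ Icc 1 (n - 1), ∀ j ∈ Icc 1 (n - 1), i ≠ j → z i ≠ z j)
    (hq2 : ∀ i ∈ Icc 1 n, ∀ j ∈ Icc 1 n, q ^ 2 * z i ≠ z j)
    (hq1 : ∀ i ∈ Icc 1 n, ∀ j ∈ Icc 1 n, z i + q * z j ≠ 0)
    (hq3 : ∀ i ∈ Icc 1 n, ∀ j ∈ Icc 1 n, z i + q ^ 3 * z j ≠ 0) :
    ∀ j ∈ Icc 1 (n - 1),
      (∑ k ∈ Icc 1 (n - 1), muKS n q z k (z n) * (1 / (1 - (q ^ 2)⁻¹ * z k / z j))) +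
      (∑ k ∈ Icc 1 (n - 1), nuKS n q z k (z n) * (1 / (1 + q⁻¹ * z k / z j)))
      = 1 / (1 - (q ^ 2)⁻¹ * z n / z j) :=
  weight_function_munu_first_columns_general K n q z hq hdist hq2 hq1 hq3
end

section
/- Let K be a field, n ≥ 2 an integer, and let q, z_1, …, z_n ∈ K be nonzero elements such that z_1, …, z_{n−1} are pairwise distinct and, for all i, j ∈ {1,…,n}: q²z_i ≠ z_j, z_i + q·z_j ≠ 0, and z_i + q³·z_j ≠ 0. Then for every j ∈ {1,…,n−1} one has ∑_{k=1}^{n−1} μ_k(z_1,…,z_{n−1};z_n) · 1/(1+q^{−3}z_k/z_j) + ∑_{k=1}^{n−1} ν_k(z_1,…,z_{n−1};z_n) · 1/(1−q^{−2}z_k/z_j) = 1/(1+q^{−3}z_n/z_j). -/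
/-!
Let `P(w) = ∏_{i=1}^{n-1} (w - q² z_i)(w + q³ z_i)` and take the `2(n-1)` nodes `z_k`, `-q z_k`, with
Lagrange basis `ℓ`. Then `μ_k(t) = P(z_k)/P(t) · ℓ_{z_k}(t)` and `ν_k(t) = P(-q z_k)/P(t) · ℓ_{-q z_k}(t)`,
and both factors in the identity are `g(node)` for `g(y) = q³ z_j / (y + q³ z_j)`. Since `P` vanishes
at `-q³ z_j`, `P(w)/(w + q³ z_j)` is a polynomial of degree below the number of nodes, so it equals
its Lagrange interpolant; evaluated at `t = z_n` this is the identity.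
-/

open Finset

open Polynomial

namespace Finset

variable {α β : Type*} [DecidableEq α] [DecidableEq β] (s : Finset α) (t : Finset β)

theorem disjSum_erase_inl (a : α) : (s.disjSum t).erase (.inl a) = (s.erase a).disjSum t := by
  ext (x | x) <;> simp

theorem disjSum_erase_inr (b : β) : (s.disjSum t).erase (.inr b) = s.disjSum (t.erase b) := by
  ext (x | x) <;> simp

end Finset

namespace Lagrange

variable {F ι : Type*} [Field F] [DecidableEq ι] {s : Finset ι} {v : ι → F}

theorem eval_basis (i : ι) (x : F) :
    (Lagrange.basis s v i).eval x = ∏ j ∈ s.erase i, (x - v j) / (v i - v j) := by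
  simp only [Lagrange.basis, basisDivisor, eval_prod, eval_mul, eval_C, eval_sub, eval_X,
    div_eq_inv_mul]

theorem eval_eq_sum_eval_mul_eval_basis (hvs : Set.InjOn v s) {f : F[X]} (hf : f.degree < #s)
    (x : F) : f.eval x = ∑ i ∈ s, f.eval (v i) * (Lagrange.basis s v i).eval x := by
  conv_lhs => rw [eq_interpolate hvs hf]
  simp only [interpolate_apply, eval_finsetSum, eval_mul, eval_C]

theorem sum_eval_div_sub_mul_eval_basis (hvs : Set.InjOn v s) {f : F[X]} {a x : F}
    (hf : f.degree ≤ #s) (ha : f.IsRoot a) (hva : ∀ i ∈ s, v i ≠ a) (hx : x ≠ a) :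
    ∑ i ∈ s, f.eval (v i) / (v i - a) * (Lagrange.basis s v i).eval x = f.eval x / (x - a) := by
  set g := f /ₘ (X - C a)
  have eval_f : ∀ y, f.eval y = (y - a) * g.eval y := fun y => by
    conv_lhs => rw [← mul_divByMonic_eq_iff_isRoot.mpr ha]
    simp [g]
  have hg : g.degree < #s := by
    rcases eq_or_ne f 0 with rfl | hf0
    · simp [g]
    · exact (degree_divByMonic_lt f _ hf0 (by simp)).trans_le hf
  have hdiv : ∀ y, y ≠ a → f.eval y / (y - a) = g.eval y := fun y hy => by
    rw [eval_f, mul_div_cancel_left₀ _ (sub_ne_zero.mpr hy)]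
  rw [hdiv x hx, eval_eq_sum_eval_mul_eval_basis hvs hg x]
  exact sum_congr rfl fun i hi => by rw [hdiv _ (hva i hi)]

end Lagrange

namespace KhoroshkinShapiro

variable {K : Type*} [Field K] (n : ℕ) (q : K) (z : ℕ → K)

def node : ℕ ⊕ ℕ → K := Sum.elim z fun k => -q * z k

def nodes : Finset (ℕ ⊕ ℕ) := (Icc 1 (n - 1)).disjSum (Icc 1 (n - 1))

@[simp] theorem node_inl (k : ℕ) : node q z (.inl k) = z k := rfl

@[simp] theorem node_inr (k : ℕ) : node q z (.inr k) = -q * z k := rfl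

noncomputable def denomPoly : K[X] :=
  ∏ i ∈ Icc 1 (n - 1), (X - C (q ^ 2 * z i)) * (X + C (q ^ 3 * z i))

theorem eval_denomPoly (t : K) :
    (denomPoly n q z).eval t = ∏ i ∈ Icc 1 (n - 1), (t - q ^ 2 * z i) * (t + q ^ 3 * z i) := by
  simp [denomPoly, eval_prod]

theorem degree_denomPoly_le : (denomPoly n q z).degree ≤ #(nodes n) := by
  refine degree_le_of_natDegree_le ((natDegree_prod_le _ _).trans ?_)
  rw [nodes, card_disjSum, ← two_mul, mul_comm, ← smul_eq_mul, ← sum_const]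
  exact sum_le_sum fun i _ =>
    natDegree_mul_le.trans_eq (by rw [natDegree_X_sub_C, natDegree_X_add_C]; rfl)

theorem muKS_eq_lagrange (k : ℕ) (t : K) :
    muKS n q z k t = (denomPoly n q z).eval (z k) / (denomPoly n q z).eval t *
      (Lagrange.basis (nodes n) (node q z) (.inl k)).eval t := by
  simp only [muKS, eval_denomPoly, Lagrange.eval_basis, nodes, disjSum_erase_inl, prod_disjSum,
    node_inl, node_inr, sub_neg_eq_add, neg_mul, prod_div_distrib, prod_mul_distrib]
  ring

theorem nuKS_eq_lagrange (hq : q ≠ 0) {k : ℕ} (hk : k ∈ Icc 1 (n - 1)) (t : K) :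
    nuKS n q z k t = (denomPoly n q z).eval (-q * z k) / (denomPoly n q z).eval t *
      (Lagrange.basis (nodes n) (node q z) (.inr k)).eval t := by
  obtain ⟨m, rfl⟩ : ∃ m, n = m + 2 := ⟨n - 2, by grind⟩
  rw [show m + 2 - 1 = m + 1 from rfl] at hk
  have hcard : #((Icc 1 (m + 1)).erase k) = m := by simp [card_erase_of_mem hk]
  have h_scaled (i : ℕ) : (t - -q * z i) / (-q * z k - -q * z i) =
      (-q)⁻¹ * ((t + q * z i) / (z k - z i)) := by
    rw [show -q * z k - -q * z i = -q * (z k - z i) by ring, div_eq_mul_inv, mul_inv]; ring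
  have h_mixed (i : ℕ) : (t - z i) / (-q * z k - z i) = -1 * ((t - z i) / (q * z k + z i)) := by
    rw [show -q * z k - z i = -(q * z k + z i) by ring, div_neg]; ring
  have h_root (i : ℕ) : (-q * z k - q ^ 2 * z i) * (-q * z k + q ^ 3 * z i) =
      q ^ 2 * ((z k + q * z i) * (z k - q ^ 2 * z i)) := by ring
  simp only [nuKS, eval_denomPoly, Lagrange.eval_basis, nodes, disjSum_erase_inr, prod_disjSum,
    node_inl, node_inr, h_scaled, h_mixed, h_root, show m + 2 - 1 = m + 1 from rfl]
  simp only [prod_div_distrib, prod_mul_distrib, prod_const, hcard, Nat.card_Icc,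
    Nat.add_sub_cancel]
  have h_sign : -q ^ (m + 2) = (q ^ 2) ^ (m + 1) * (-1) ^ (m + 1) * (-q)⁻¹ ^ m := by
    rw [inv_pow, eq_mul_inv_iff_mul_eq₀ (pow_ne_zero _ (neg_ne_zero.2 hq)), neg_pow q]
    ring
  rw [h_sign]
  ring

theorem sum_nodes (f : ℕ ⊕ ℕ → K) :
    ∑ i ∈ nodes n, f i = ∑ k ∈ Icc 1 (n - 1), f (.inl k) + ∑ k ∈ Icc 1 (n - 1), f (.inr k) :=
  sum_disjSum _ _ _

variable {n q z}

theorem injOn_node (hq : q ≠ 0) (hz : Set.InjOn z (Icc 1 (n - 1)))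
    (hq1 : ∀ i ∈ Icc 1 (n - 1), ∀ j ∈ Icc 1 (n - 1), z i + q * z j ≠ 0) :
    Set.InjOn (node q z) (nodes n) := by
  rintro (a | a) ha (b | b) hb h <;>
    simp only [nodes, mem_coe, inl_mem_disjSum, inr_mem_disjSum, node_inl, node_inr,
      Sum.inl.injEq, Sum.inr.injEq, reduceCtorEq] at ha hb h ⊢
  · exact hz ha hb h
  · exact hq1 a ha b hb (by rw [h]; ring)
  · exact hq1 b hb a ha (by rw [← h]; ring)
  · exact hz ha hb (mul_left_cancel₀ (neg_ne_zero.2 hq) h)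

theorem node_ne_neg (hq : q ≠ 0) {a : K}
    (hq2 : ∀ k ∈ Icc 1 (n - 1), q ^ 2 * a ≠ z k) (hq3 : ∀ k ∈ Icc 1 (n - 1), z k + q ^ 3 * a ≠ 0) :
    ∀ i ∈ nodes n, node q z i ≠ -(q ^ 3 * a) := by
  rintro (k | k) hk h <;>
    simp only [nodes, inl_mem_disjSum, inr_mem_disjSum, node_inl, node_inr] at hk h
  · exact hq3 k hk (by rw [h]; ring)
  · exact hq2 k hk (mul_left_cancel₀ hq (by linear_combination h))

theorem isRoot_denomPoly {j : ℕ} (hj : j ∈ Icc 1 (n - 1)) :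
    (denomPoly n q z).IsRoot (-(q ^ 3 * z j)) := by
  rw [IsRoot.def, eval_denomPoly]
  exact prod_eq_zero hj (by ring)

end KhoroshkinShapiro

open KhoroshkinShapiro in
theorem weight_function_munu_second_columns_general
    (K : Type*) [Field K] (n : ℕ) (q : K) (z : ℕ → K)
    (hq : q ≠ 0) (hz : ∀ i ∈ Icc 1 n, z i ≠ 0)
    (hdist : ∀ i ∈ Icc 1 (n - 1), ∀ j ∈ Icc 1 (n - 1), i ≠ j → z i ≠ z j)
    (hq2 : ∀ i ∈ Icc 1 n, ∀ j ∈ Icc 1 n, q ^ 2 * z i ≠ z j)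
    (hq1 : ∀ i ∈ Icc 1 n, ∀ j ∈ Icc 1 n, z i + q * z j ≠ 0)
    (hq3 : ∀ i ∈ Icc 1 n, ∀ j ∈ Icc 1 n, z i + q ^ 3 * z j ≠ 0) :
    ∀ j ∈ Icc 1 (n - 1),
      (∑ k ∈ Icc 1 (n - 1), muKS n q z k (z n) * (1 / (1 + (q ^ 3)⁻¹ * z k / z j))) +
      (∑ k ∈ Icc 1 (n - 1), nuKS n q z k (z n) * (1 / (1 - (q ^ 2)⁻¹ * z k / z j)))
      = 1 / (1 + (q ^ 3)⁻¹ * z n / z j) := by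
  intro j hj
  have hT : Icc 1 (n - 1) ⊆ Icc 1 n := Icc_subset_Icc_right (Nat.sub_le n 1)
  have hn : n ∈ Icc 1 n := by grind
  have hzj := hz j (hT hj)
  set P := denomPoly n q z
  have h_weight (y : K) : 1 / (1 + (q ^ 3)⁻¹ * y / z j) = q ^ 3 * z j / (y + q ^ 3 * z j) := by
    field_simp
    ring
  have h_weight_neg (k : ℕ) :
      1 / (1 - (q ^ 2)⁻¹ * z k / z j) = q ^ 3 * z j / (-q * z k + q ^ 3 * z j) := by
    rw [← h_weight]
    field_simp
    ring
  have hPx : P.eval (z n) ≠ 0 := by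
    rw [eval_denomPoly]
    exact prod_ne_zero_iff.2 fun i hi =>
      mul_ne_zero (sub_ne_zero.2 (hq2 i (hT hi) n hn).symm) (hq3 n hn i (hT hi))
  have key := Lagrange.sum_eval_div_sub_mul_eval_basis
    (injOn_node hq (fun a ha b hb h => by_contra fun hab => hdist a ha b hb hab h)
      fun a ha b hb => hq1 a (hT ha) b (hT hb))
    (degree_denomPoly_le n q z) (isRoot_denomPoly hj)
    (node_ne_neg hq (fun k hk => hq2 j (hT hj) k (hT hk)) fun k hk => hq3 k (hT hk) j (hT hj))
    (x := z n) fun h => hq3 n hn j (hT hj) (by rw [h]; ring)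
  rw [sum_nodes] at key
  simp only [node_inl, node_inr, sub_neg_eq_add] at key
  have h_rhs : q ^ 3 * z j / (z n + q ^ 3 * z j) =
      q ^ 3 * z j / P.eval (z n) * (P.eval (z n) / (z n + q ^ 3 * z j)) := by
    field_simp
  rw [h_weight, h_rhs, ← key, mul_add, mul_sum, mul_sum]
  congr 1 <;> refine sum_congr rfl fun k hk => ?_
  · rw [muKS_eq_lagrange, h_weight]
    ring
  · rw [nuKS_eq_lagrange n q z hq hk, h_weight_neg]
    ring

/-- Khoroshkin–Shapiro, Proposition 8, second family of columns of the linear system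
`(μ,ν)·M = (V_{q²}, V_{-q³})`. -/
theorem weight_function_munu_second_columns
    (K : Type*) [Field K] (n : ℕ) (hn : 2 ≤ n) (q : K) (z : ℕ → K)
    (hq : q ≠ 0) (hz : ∀ i ∈ Icc 1 n, z i ≠ 0)
    (hdist : ∀ i ∈ Icc 1 (n - 1), ∀ j ∈ Icc 1 (n - 1), i ≠ j → z i ≠ z j)
    (hq2 : ∀ i ∈ Icc 1 n, ∀ j ∈ Icc 1 n, q ^ 2 * z i ≠ z j)
    (hq1 : ∀ i ∈ Icc 1 n, ∀ j ∈ Icc 1 n, z i + q * z j ≠ 0)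
    (hq3 : ∀ i ∈ Icc 1 n, ∀ j ∈ Icc 1 n, z i + q ^ 3 * z j ≠ 0) :
    ∀ j ∈ Icc 1 (n - 1),
      (∑ k ∈ Icc 1 (n - 1), muKS n q z k (z n) * (1 / (1 + (q ^ 3)⁻¹ * z k / z j))) +
      (∑ k ∈ Icc 1 (n - 1), nuKS n q z k (z n) * (1 / (1 - (q ^ 2)⁻¹ * z k / z j)))
      = 1 / (1 + (q ^ 3)⁻¹ * z n / z j) :=
  weight_function_munu_second_columns_general K n q z hq hz hdist hq2 hq1 hq3
end

section
/- Let K be a field, n ≥ 2 an integer, and let q, z_1, …, z_n ∈ K be nonzero elements such that z_2, …, z_n are pairwise distinct and q²z_i ≠ z_j for all i, j ∈ {1,…,n}. Then for every j ∈ {2,…,n} one has ∑_{k=2}^{n} ρ̃_k(z_1;z_2,…,z_n) · 1/(1−q²z_k/z_j) = 1/(1−q²z_1/z_j). -/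
open Finset

open Polynomial in
/-- Lagrange interpolation evaluated at an arbitrary point, in rational-function form. -/
theorem lagrange_eval_aux {K : Type*} [Field K] {ι : Type*} [DecidableEq ι]
    (s : Finset ι) (v : ι → K) (hvs : Set.InjOn v s) (f : K[X])
    (hf : f.degree < s.card) (x : K) :
    f.eval x = ∑ k ∈ s, f.eval (v k) * ∏ j ∈ s.erase k, (x - v j) / (v k - v j) := by
  conv_lhs => rw [Lagrange.eq_interpolate hvs hf]
  rw [Lagrange.interpolate_apply, Polynomial.eval_finset_sum]
  refine sum_congr rfl fun k _ => ?_
  rw [Polynomial.eval_mul, Polynomial.eval_C, Lagrange.basis, Polynomial.eval_prod]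
  congr 1
  refine prod_congr rfl fun i _ => ?_
  rw [Lagrange.basisDivisor, Polynomial.eval_mul, Polynomial.eval_C, Polynomial.eval_sub,
    Polynomial.eval_X, Polynomial.eval_C, div_eq_inv_mul, mul_comm]

/-- Khoroshkin–Shapiro: the `P⁻`-analogue of Proposition 6(a), the identity
`∑_k ρ̃_k · 1/(1 - q² z_k/z_j) = 1/(1 - q² z_1/z_j)` used in the proof of Theorem 3. -/
theorem weight_function_VM_inverse_minus
    (K : Type*) [Field K] (n : ℕ) (hn : 2 ≤ n) (q : K) (z : ℕ → K)
    (hq : q ≠ 0) (hz : ∀ i ∈ Icc 1 n, z i ≠ 0)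
    (hdist : ∀ i ∈ Icc 2 n, ∀ j ∈ Icc 2 n, i ≠ j → z i ≠ z j)
    (hq2 : ∀ i ∈ Icc 1 n, ∀ j ∈ Icc 1 n, q ^ 2 * z i ≠ z j) :
    ∀ j ∈ Icc 2 n,
      ∑ k ∈ Icc 2 n,
        ((∏ i ∈ (Icc 2 n).erase k, (z 1 - z i) / (z k - z i)) *
          ∏ i ∈ Icc 2 n, (q ^ 2 * z k - z i) / (q ^ 2 * z 1 - z i)) *
        (1 / (1 - q ^ 2 * z k / z j))
      = 1 / (1 - q ^ 2 * z 1 / z j) := by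
  intro j hj
  set s : Finset ℕ := Icc 2 n with hs
  have hsub : ∀ i ∈ s, i ∈ Icc 1 n := by
    intro i hi
    simp only [hs, mem_Icc] at hi ⊢
    omega
  have h1 : (1 : ℕ) ∈ Icc 1 n := by simp [mem_Icc]; omega
  have hj1 : j ∈ Icc 1 n := hsub j hj
  have hzj : z j ≠ 0 := hz j hj1
  have hvs : Set.InjOn z s := by
    intro a ha b hb hab
    by_contra hne
    exact hdist a ha b hb hne hab
  -- the polynomial P(t) = -z j * ∏_{i ∈ s.erase j} (q² t - z i)
  set P : Polynomial K :=
    Polynomial.C (-(z j)) *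
      ∏ i ∈ s.erase j, (Polynomial.C (q ^ 2) * Polynomial.X - Polynomial.C (z i)) with hP
  have hdeg : P.degree < s.card := by
    have hcard : (s.erase j).card = s.card - 1 := card_erase_of_mem hj
    have h2 : (∏ i ∈ s.erase j,
        (Polynomial.C (q ^ 2) * Polynomial.X - Polynomial.C (z i))).degree ≤
        (((s.erase j).card : ℕ) : WithBot ℕ) := by
      refine (Polynomial.degree_prod_le _ _).trans ?_
      calc ∑ i ∈ s.erase j,
            (Polynomial.C (q ^ 2) * Polynomial.X - Polynomial.C (z i)).degree
          ≤ ∑ _i ∈ s.erase j, (1 : WithBot ℕ) := by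
            refine Finset.sum_le_sum fun i _ => ?_
            refine (Polynomial.degree_sub_le _ _).trans ?_
            simp only [max_le_iff]
            constructor
            · exact Polynomial.degree_C_mul_X_le _
            · exact Polynomial.degree_C_le.trans (by exact_mod_cast Nat.WithBot.coe_nonneg)
        _ = (((s.erase j).card : ℕ) : WithBot ℕ) := by
            simp [Finset.sum_const]
    have hcardpos : 0 < s.card := by
      rw [hs, Nat.card_Icc]; omega
    calc P.degree ≤ _ := Polynomial.degree_mul_le _ _
      _ ≤ 0 + (((s.erase j).card : ℕ) : WithBot ℕ) := add_le_add Polynomial.degree_C_le h2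
      _ < ((s.card : ℕ) : WithBot ℕ) := by
          rw [zero_add, hcard]
          exact_mod_cast Nat.cast_lt.mpr (Nat.sub_lt hcardpos one_pos)
  have hPeval : ∀ t : K, P.eval t = -(z j) * ∏ i ∈ s.erase j, (q ^ 2 * t - z i) := by
    intro t
    simp [hP, Polynomial.eval_prod]
  -- key evaluation: for any t with q² t ≠ z j,
  -- ∏_{i ∈ s} (q² t - z i) * (z j / (z j - q² t)) = P.eval t
  have hkey : ∀ t : K, q ^ 2 * t ≠ z j →
      (∏ i ∈ s, (q ^ 2 * t - z i)) * (1 / (1 - q ^ 2 * t / z j)) = P.eval t := by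
    intro t ht
    have h2 : (1 : K) - q ^ 2 * t / z j = (z j - q ^ 2 * t) / z j := by
      field_simp
    have h3 : z j - q ^ 2 * t ≠ 0 := sub_ne_zero_of_ne (Ne.symm ht)
    rw [h2, one_div_div, ← Finset.mul_prod_erase s _ hj, hPeval]
    field_simp
    ring
  -- Lagrange interpolation at x = z 1
  have hlag := lagrange_eval_aux s z hvs P hdeg (z 1)
  -- denominator
  set D : K := ∏ i ∈ s, (q ^ 2 * z 1 - z i) with hD
  have hDne : D ≠ 0 := by
    refine Finset.prod_ne_zero_iff.mpr fun i hi => ?_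
    exact sub_ne_zero_of_ne (hq2 1 h1 i (hsub i hi))
  -- rewrite each summand
  have hterm : ∀ k ∈ s,
      ((∏ i ∈ s.erase k, (z 1 - z i) / (z k - z i)) *
        ∏ i ∈ s, (q ^ 2 * z k - z i) / (q ^ 2 * z 1 - z i)) *
        (1 / (1 - q ^ 2 * z k / z j))
      = (P.eval (z k) * ∏ i ∈ s.erase k, (z 1 - z i) / (z k - z i)) / D := by
    intro k hk
    have hk1 : k ∈ Icc 1 n := hsub k hk
    have hBk : (∏ i ∈ s, (q ^ 2 * z k - z i) / (q ^ 2 * z 1 - z i))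
        = (∏ i ∈ s, (q ^ 2 * z k - z i)) / D := by
      rw [hD, Finset.prod_div_distrib]
    rw [hBk, ← hkey (z k) (hq2 k hk1 j hj1)]
    ring
  rw [Finset.sum_congr rfl hterm, ← Finset.sum_div, ← hlag]
  -- compute P.eval (z 1) / D
  have hsplitD : D = (q ^ 2 * z 1 - z j) * ∏ i ∈ s.erase j, (q ^ 2 * z 1 - z i) := by
    rw [hD, ← Finset.mul_prod_erase s _ hj]
  have hprodne : (∏ i ∈ s.erase j, (q ^ 2 * z 1 - z i)) ≠ 0 := by
    refine Finset.prod_ne_zero_iff.mpr fun i hi => ?_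
    exact sub_ne_zero_of_ne (hq2 1 h1 i (hsub i (mem_of_mem_erase hi)))
  have h1j : q ^ 2 * z 1 - z j ≠ 0 := sub_ne_zero_of_ne (hq2 1 h1 j hj1)
  rw [hPeval, hsplitD]
  rw [mul_comm (q ^ 2 * z 1 - z j) _, ← div_div, mul_div_assoc,
    div_self hprodne, mul_one]
  have h2 : (1 : K) - q ^ 2 * z 1 / z j = (z j - q ^ 2 * z 1) / z j := by
    field_simp
  have h3 : z j - q ^ 2 * z 1 ≠ 0 := sub_ne_zero_of_ne (Ne.symm (hq2 1 h1 j hj1))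
  rw [h2, one_div_div]
  field_simp
  ring
end

section
/- Let K be a field, n ≥ 2 an integer, and let q, z_1, …, z_n ∈ K be nonzero elements such that z_2, …, z_n are pairwise distinct, q²z_i ≠ z_j for all i, j ∈ {1,…,n}, and q·z_i + z_j ≠ 0 for all i, j ∈ {1,…,n}. Then for every k ∈ {2,…,n} one has λ̃_k(z_1;z_2,…,z_n) = ∑_{i=2}^{n} ρ̃_i(z_1;z_2,…,z_n) · 1/(1+q^{−1}z_i/z_k) − 1/(1+q^{−1}z_1/z_k). -/
open Finset Polynomial

/-- Khoroshkin–Shapiro: the `P⁻`-analogue of Proposition 6(b), identifying the coefficient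
function `λ̃_k(z_1;z_2,…,z_n)`, used in the proof of Theorem 3. -/
theorem weight_function_lambda_identity_minus
    (K : Type*) [Field K] (n : ℕ) (hn : 2 ≤ n) (q : K) (z : ℕ → K)
    (hq : q ≠ 0) (hz : ∀ i ∈ Icc 1 n, z i ≠ 0)
    (hdist : ∀ i ∈ Icc 2 n, ∀ j ∈ Icc 2 n, i ≠ j → z i ≠ z j)
    (hq2 : ∀ i ∈ Icc 1 n, ∀ j ∈ Icc 1 n, q ^ 2 * z i ≠ z j)
    (hq1 : ∀ i ∈ Icc 1 n, ∀ j ∈ Icc 1 n, q * z i + z j ≠ 0) :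
    ∀ k ∈ Icc 2 n,
      -(q * z k) / (z 1 + q * z k) *
        ∏ i ∈ Icc 2 n,
          ((z 1 - z i) * (q ^ 3 * z k + z i)) / ((q * z k + z i) * (q ^ 2 * z 1 - z i))
      = (∑ i ∈ Icc 2 n,
          ((∏ m ∈ (Icc 2 n).erase i, (z 1 - z m) / (z i - z m)) *
            ∏ m ∈ Icc 2 n, (q ^ 2 * z i - z m) / (q ^ 2 * z 1 - z m)) *
          (1 / (1 + q⁻¹ * z i / z k)))
        - 1 / (1 + q⁻¹ * z 1 / z k) := by
  intro k hk
  set s : Finset ℕ := Icc 2 n with hs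
  -- membership helpers
  have hsub : ∀ m, m ∈ s → m ∈ Icc 1 n := by
    intro m hm; rw [hs, mem_Icc] at hm; rw [mem_Icc]; omega
  have h1 : (1 : ℕ) ∈ Icc 1 n := by rw [mem_Icc]; omega
  have hk1 : k ∈ Icc 1 n := hsub k hk
  have hzk : z k ≠ 0 := hz k hk1
  -- nonvanishing facts
  have hDm : ∀ m ∈ s, q ^ 2 * z 1 - z m ≠ 0 := fun m hm =>
    sub_ne_zero.mpr (hq2 1 h1 m (hsub m hm))
  have hPm : ∀ m ∈ s, q * z k + z m ≠ 0 := fun m hm => hq1 k hk1 m (hsub m hm)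
  have hz1qk : z 1 + q * z k ≠ 0 := by
    have := hq1 k hk1 1 h1; rwa [add_comm] at this
  have hqkz1 : q * z k + z 1 ≠ 0 := hq1 k hk1 1 h1
  have hinj : Set.InjOn z ↑s := by
    intro a ha b hb hab
    by_contra hne
    exact hdist a (by simpa using ha) b (by simpa using hb) hne hab
  -- abbreviations
  set D : K := ∏ m ∈ s, (q ^ 2 * z 1 - z m) with hD
  set G : K := ∏ m ∈ s, (q ^ 3 * z k + z m) with hG
  set Pk : K := ∏ m ∈ s, (q * z k + z m) with hPk
  set E : K := ∏ m ∈ s, (z 1 - z m) with hE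
  have hDne : D ≠ 0 := prod_ne_zero_iff.mpr hDm
  have hPkne : Pk ≠ 0 := prod_ne_zero_iff.mpr hPm
  set c : K := q * z k * G / Pk with hc
  have hcPk : c * Pk = q * z k * G := div_mul_cancel₀ _ hPkne
  -- the auxiliary polynomial
  set A : K[X] := ∏ m ∈ s, (C (q ^ 2) * X - C (z m)) with hA
  set B : K[X] := ∏ m ∈ s, (X - C (z m)) with hB
  set H : K[X] := C (q * z k) * A - C c * B with hH
  -- root at -(q z_k)
  have hroot : H.IsRoot (-(q * z k)) := by
    have hAe : A.eval (-(q * z k)) = (-1 : K) ^ s.card * G := by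
      rw [hA, eval_prod, hG, ← prod_const (-1 : K), ← prod_mul_distrib]
      refine prod_congr rfl fun m hm => ?_
      simp only [eval_sub, eval_mul, eval_C, eval_X]
      ring
    have hBe : B.eval (-(q * z k)) = (-1 : K) ^ s.card * Pk := by
      rw [hB, eval_prod, hPk, ← prod_const (-1 : K), ← prod_mul_distrib]
      refine prod_congr rfl fun m hm => ?_
      simp only [eval_sub, eval_C, eval_X]
      ring
    have : H.eval (-(q * z k)) = (-1 : K) ^ s.card * (q * z k * G - c * Pk) := by
      rw [hH, eval_sub, eval_mul, eval_mul, eval_C, eval_C, hAe, hBe]; ring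
    rw [IsRoot, this, hcPk]; ring
  obtain ⟨R, hR⟩ := (dvd_iff_isRoot).mpr hroot
  -- degree bound
  have hcard : s.card = n - 1 := by rw [hs, Nat.card_Icc]; omega
  have hcard1 : 1 ≤ s.card := by omega
  have hHdeg : H.natDegree ≤ s.card := by
    have hAd : A.natDegree ≤ s.card := by
      refine le_trans (natDegree_prod_le _ _) ?_
      have h1deg : ∀ m ∈ s, (C (q ^ 2) * X - C (z m)).natDegree ≤ 1 :=
        fun m _ => by compute_degree
      refine le_trans (Finset.sum_le_card_nsmul s _ 1 h1deg) (by simp)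
    have hBd : B.natDegree ≤ s.card := by
      refine le_trans (natDegree_prod_le _ _) ?_
      have h1deg : ∀ m ∈ s, (X - C (z m)).natDegree ≤ 1 :=
        fun m _ => by compute_degree
      refine le_trans (Finset.sum_le_card_nsmul s _ 1 h1deg) (by simp)
    refine le_trans (natDegree_sub_le _ _) (max_le ?_ ?_)
    · exact le_trans (natDegree_C_mul_le _ _) hAd
    · exact le_trans (natDegree_C_mul_le _ _) hBd
  have hRdeg : R.degree < (s.card : WithBot ℕ) := by
    by_cases hR0 : R = 0
    · rw [hR0, degree_zero]
      exact_mod_cast WithBot.bot_lt_coe _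
    · rw [← natDegree_lt_iff_degree_lt hR0]
      have hmul : H.natDegree = 1 + R.natDegree := by
        rw [hR, natDegree_mul (X_sub_C_ne_zero _) hR0, natDegree_X_sub_C]
      omega
  -- evaluate H and R
  have hHevals : ∀ t : K, H.eval t =
      q * z k * (∏ m ∈ s, (q ^ 2 * t - z m)) - c * ∏ m ∈ s, (t - z m) := by
    intro t
    rw [hH, eval_sub, eval_mul, eval_mul, eval_C, eval_C, hA, hB, eval_prod, eval_prod]
    congr 1
    · congr 1; exact prod_congr rfl fun m _ => by simp
    · congr 1; exact prod_congr rfl fun m _ => by simp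
  have hReval : ∀ t : K, H.eval t = (t + q * z k) * R.eval t := by
    intro t
    rw [hR, eval_mul, eval_sub, eval_X, eval_C]
    ring_nf
  have hRi : ∀ i ∈ s, R.eval (z i) =
      q * z k * (∏ m ∈ s, (q ^ 2 * z i - z m)) / (z i + q * z k) := by
    intro i hi
    have hiq : z i + q * z k ≠ 0 := by
      have := hq1 k hk1 i (hsub i hi); rwa [add_comm] at this
    have h0 : ∏ m ∈ s, (z i - z m) = 0 := Finset.prod_eq_zero hi (sub_self (z i))
    rw [eq_div_iff hiq, mul_comm, ← hReval (z i), hHevals (z i), h0]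
    ring
  have hR1 : R.eval (z 1) = (q * z k * D - c * E) / (z 1 + q * z k) := by
    rw [eq_div_iff hz1qk, mul_comm, ← hReval (z 1), hHevals (z 1), ← hD, ← hE]
  -- Lagrange interpolation
  have hsum : ∑ i ∈ s, eval (z 1) (Lagrange.basis s z i) * R.eval (z i)
      = R.eval (z 1) := by
    conv_rhs => rw [Lagrange.eq_interpolate hinj hRdeg]
    rw [Lagrange.interpolate_apply, Polynomial.eval_finset_sum]
    exact sum_congr rfl fun i _ => by rw [eval_mul, eval_C, mul_comm]
  -- fraction simplification
  have hfrac : ∀ x : K, q * z k + x ≠ 0 →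
      (1 : K) / (1 + q⁻¹ * x / z k) = q * z k / (q * z k + x) := by
    intro x hx
    have h2 : 1 + q⁻¹ * x / z k = (q * z k + x) / (q * z k) := by
      field_simp
    rw [h2, one_div_div]
  -- rewrite each term of the sum
  have hterm : ∀ i ∈ s,
      ((∏ m ∈ s.erase i, (z 1 - z m) / (z i - z m)) *
        ∏ m ∈ s, (q ^ 2 * z i - z m) / (q ^ 2 * z 1 - z m)) *
        (1 / (1 + q⁻¹ * z i / z k))
      = eval (z 1) (Lagrange.basis s z i) * R.eval (z i) / D := by
    intro i hi
    have hiq : z i + q * z k ≠ 0 := by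
      have := hq1 k hk1 i (hsub i hi); rwa [add_comm] at this
    have hqizk : q * z k + z i ≠ 0 := hq1 k hk1 i (hsub i hi)
    have hLi : eval (z 1) (Lagrange.basis s z i)
        = ∏ m ∈ s.erase i, (z 1 - z m) / (z i - z m) := by
      unfold Lagrange.basis Lagrange.basisDivisor
      rw [eval_prod]
      refine prod_congr rfl fun m hm => ?_
      rw [eval_mul, eval_C, eval_sub, eval_X, eval_C, div_eq_mul_inv, mul_comm]
    have herase : ∏ x ∈ s.erase i, (z i - z x) ≠ 0 :=
      prod_ne_zero_iff.mpr fun m hm => sub_ne_zero.mpr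
        (hdist i hi m (mem_of_mem_erase hm) (Ne.symm (ne_of_mem_erase hm)))
    have hmid : ∏ m ∈ s, (q ^ 2 * z i - z m) / (q ^ 2 * z 1 - z m)
        = (∏ m ∈ s, (q ^ 2 * z i - z m)) / D := by
      rw [hD, prod_div_distrib]
    rw [hLi, hRi i hi, hfrac (z i) hqizk, hmid, prod_div_distrib]
    field_simp
    ring
  rw [Finset.sum_congr rfl hterm, ← sum_div, hsum, hR1, hfrac (z 1) hqkz1]
  have hLHS : ∏ i ∈ s,
      ((z 1 - z i) * (q ^ 3 * z k + z i)) / ((q * z k + z i) * (q ^ 2 * z 1 - z i))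
      = (E * G) / (Pk * D) := by
    rw [prod_div_distrib, prod_mul_distrib, prod_mul_distrib, ← hE, ← hG, ← hPk, ← hD]
  rw [hLHS, hc]
  field_simp
  ring
end

section
/- Let K be a field and let q, u, w, z ∈ K satisfy q ≠ 0, q³+1 ≠ 0, q²+1 ≠ 0, u ≠ w, u ≠ q²z, w ≠ q²z, u + q³z ≠ 0, w + q³z ≠ 0, q·u + z ≠ 0, and q·w + z ≠ 0. Then ((q²u−z)(q³u+z)(u+q·z)) / ((u−q²z)(u+q³z)(q·u+z)(u−w)) = ((q²w−z)(q³w+z)(w+q·z)) / ((w−q²z)(w+q³z)(q·w+z)(u−w)) + (z·(q⁴−1)(q⁵+1)) / (q·(q³+1)(u−q²z)(q²z−w)) + (z·(q⁵+1)(q−1)(1+q²+q⁴)) / (q·(1+q²)(u+q³z)(q³z+w)) + (z·(q²−1)) / ((q²−q+1)(q²+1)(u+q^{−1}z)(q^{−1}z+w)). -/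
set_option maxHeartbeats 1000000

/-- Partial fraction decomposition of `γ(z/x)` in one variable. -/
theorem gamma_key (K : Type*) [Field K] (q x z : K)
    (hq : q ≠ 0) (hq3 : q ^ 3 + 1 ≠ 0) (hq2 : q ^ 2 + 1 ≠ 0)
    (hqq : q ^ 2 - q + 1 ≠ 0)
    (hx : x - q ^ 2 * z ≠ 0) (hx3 : x + q ^ 3 * z ≠ 0) (hqx : q * x + z ≠ 0) :
    ((q ^ 2 * x - z) * (q ^ 3 * x + z) * (x + q * z)) /
        (x - q ^ 2 * z) / (x + q ^ 3 * z) / (q * x + z)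
      = q ^ 4
        + (z * (q ^ 4 - 1) * (q ^ 5 + 1)) / q / (q ^ 3 + 1) / (x - q ^ 2 * z)
        - (z * (q ^ 5 + 1) * (q - 1) * (1 + q ^ 2 + q ^ 4)) / q / (1 + q ^ 2) / (x + q ^ 3 * z)
        - (z * (q ^ 2 - 1)) * q / (q ^ 2 - q + 1) / (q ^ 2 + 1) / (q * x + z) := by
  have h2 : (1 : K) + q ^ 2 ≠ 0 := fun h => hq2 (by linear_combination h)
  have hqq : q ^ 2 - q + 1 ≠ 0 := fun h => by
    apply hq3; linear_combination (q + 1) * h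
  simp only [div_div]
  have hQ1 : q * (q ^ 3 + 1) * (x - q ^ 2 * z) ≠ 0 :=
    mul_ne_zero (mul_ne_zero hq hq3) hx
  have hQ2 : q * (1 + q ^ 2) * (x + q ^ 3 * z) ≠ 0 :=
    mul_ne_zero (mul_ne_zero hq h2) hx3
  have hQ3 : (q ^ 2 - q + 1) * (q ^ 2 + 1) * (q * x + z) ≠ 0 :=
    mul_ne_zero (mul_ne_zero hqq hq2) hqx
  rw [add_div' _ _ _ hQ1, div_sub_div _ _ hQ1 hQ2,
    div_sub_div _ _ (mul_ne_zero hQ1 hQ2) hQ3,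
    div_eq_div_iff (mul_ne_zero (mul_ne_zero hx hx3) hqx)
      (mul_ne_zero (mul_ne_zero hQ1 hQ2) hQ3)]
  ring

/-- Khoroshkin–Shapiro, scalar content of Proposition 11: the partial-fraction
decomposition of `γ(z/u)/(u-w)` at its simple poles `u = w`, `u = q²z`, `u = -q³z`,
`u = -q⁻¹z`. -/
theorem gamma_partial_fraction
    (K : Type*) [Field K] (q u w z : K)
    (hq : q ≠ 0) (hq3 : q ^ 3 + 1 ≠ 0) (hq2 : q ^ 2 + 1 ≠ 0)
    (huw : u ≠ w) (hu : u ≠ q ^ 2 * z) (hw : w ≠ q ^ 2 * z)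
    (hu3 : u + q ^ 3 * z ≠ 0) (hw3 : w + q ^ 3 * z ≠ 0)
    (hqu : q * u + z ≠ 0) (hqw : q * w + z ≠ 0) :
    ((q ^ 2 * u - z) * (q ^ 3 * u + z) * (u + q * z)) /
        ((u - q ^ 2 * z) * (u + q ^ 3 * z) * (q * u + z) * (u - w))
      = ((q ^ 2 * w - z) * (q ^ 3 * w + z) * (w + q * z)) /
            ((w - q ^ 2 * z) * (w + q ^ 3 * z) * (q * w + z) * (u - w))
        + (z * (q ^ 4 - 1) * (q ^ 5 + 1)) /
            (q * (q ^ 3 + 1) * (u - q ^ 2 * z) * (q ^ 2 * z - w))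
        + (z * (q ^ 5 + 1) * (q - 1) * (1 + q ^ 2 + q ^ 4)) /
            (q * (1 + q ^ 2) * (u + q ^ 3 * z) * (q ^ 3 * z + w))
        + (z * (q ^ 2 - 1)) /
            ((q ^ 2 - q + 1) * (q ^ 2 + 1) * (u + q⁻¹ * z) * (q⁻¹ * z + w)) := by
  have huw' : u - w ≠ 0 := sub_ne_zero.mpr huw
  have hu' : u - q ^ 2 * z ≠ 0 := sub_ne_zero.mpr hu
  have hw' : w - q ^ 2 * z ≠ 0 := sub_ne_zero.mpr hw
  have hw'' : q ^ 2 * z - w ≠ 0 := fun h => hw' (by linear_combination -h)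
  have hw3' : q ^ 3 * z + w ≠ 0 := fun h => hw3 (by linear_combination h)
  have hq1 : q + 1 ≠ 0 := fun h => by
    apply hq3; linear_combination (q ^ 2 - q + 1) * h
  have hqq : q ^ 2 - q + 1 ≠ 0 := fun h => by
    apply hq3; linear_combination (q + 1) * h
  have h2 : (1 : K) + q ^ 2 ≠ 0 := fun h => hq2 (by linear_combination h)
  have hui : u + q⁻¹ * z ≠ 0 := fun h => by
    apply hqu
    have := congrArg (fun t => q * t) h
    simp only [mul_add, mul_zero, ← mul_assoc, mul_inv_cancel₀ hq] at this
    linear_combination this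
  have hwi : w + q⁻¹ * z ≠ 0 := fun h => by
    apply hqw
    have := congrArg (fun t => q * t) h
    simp only [mul_add, mul_zero, ← mul_assoc, mul_inv_cancel₀ hq] at this
    linear_combination this
  have hwi' : q⁻¹ * z + w ≠ 0 := fun h => hwi (by linear_combination h)
  have KU := gamma_key K q u z hq hq3 hq2 hqq hu' hu3 hqu
  have KW := gamma_key K q w z hq hq3 hq2 hqq hw' hw3 hqw
  have r2 : ((z * (q ^ 4 - 1) * (q ^ 5 + 1)) / q / (q ^ 3 + 1) / (u - q ^ 2 * z)
        - (z * (q ^ 4 - 1) * (q ^ 5 + 1)) / q / (q ^ 3 + 1) / (w - q ^ 2 * z)) / (u - w)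
      = (z * (q ^ 4 - 1) * (q ^ 5 + 1)) / q / (q ^ 3 + 1) / (u - q ^ 2 * z) / (q ^ 2 * z - w) := by
    have d1 : q * (q ^ 3 + 1) * (u - q ^ 2 * z) ≠ 0 := mul_ne_zero (mul_ne_zero hq hq3) hu'
    have d2 : q * (q ^ 3 + 1) * (w - q ^ 2 * z) ≠ 0 := mul_ne_zero (mul_ne_zero hq hq3) hw'
    simp only [div_div]
    rw [div_sub_div _ _ d1 d2, div_div,
      div_eq_div_iff (mul_ne_zero (mul_ne_zero d1 d2) huw') (mul_ne_zero d1 hw'')]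
    ring
  have r3 : ((z * (q ^ 5 + 1) * (q - 1) * (1 + q ^ 2 + q ^ 4)) / q / (1 + q ^ 2) / (w + q ^ 3 * z)
        - (z * (q ^ 5 + 1) * (q - 1) * (1 + q ^ 2 + q ^ 4)) / q / (1 + q ^ 2) / (u + q ^ 3 * z)) / (u - w)
      = (z * (q ^ 5 + 1) * (q - 1) * (1 + q ^ 2 + q ^ 4)) / q / (1 + q ^ 2) / (u + q ^ 3 * z) / (q ^ 3 * z + w) := by
    have d1 : q * (1 + q ^ 2) * (w + q ^ 3 * z) ≠ 0 := mul_ne_zero (mul_ne_zero hq h2) hw3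
    have d2 : q * (1 + q ^ 2) * (u + q ^ 3 * z) ≠ 0 := mul_ne_zero (mul_ne_zero hq h2) hu3
    simp only [div_div]
    rw [div_sub_div _ _ d1 d2, div_div,
      div_eq_div_iff (mul_ne_zero (mul_ne_zero d1 d2) huw') (mul_ne_zero d2 hw3')]
    ring
  have r4 : ((z * (q ^ 2 - 1)) * q / (q ^ 2 - q + 1) / (q ^ 2 + 1) / (q * w + z)
        - (z * (q ^ 2 - 1)) * q / (q ^ 2 - q + 1) / (q ^ 2 + 1) / (q * u + z)) / (u - w)
      = (z * (q ^ 2 - 1)) * q * q / (q ^ 2 - q + 1) / (q ^ 2 + 1) / (q * u + z) / (q * w + z) := by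
    have d1 : (q ^ 2 - q + 1) * (q ^ 2 + 1) * (q * w + z) ≠ 0 := mul_ne_zero (mul_ne_zero hqq hq2) hqw
    have d2 : (q ^ 2 - q + 1) * (q ^ 2 + 1) * (q * u + z) ≠ 0 := mul_ne_zero (mul_ne_zero hqq hq2) hqu
    simp only [div_div]
    rw [div_sub_div _ _ d1 d2, div_div,
      div_eq_div_iff (mul_ne_zero (mul_ne_zero d1 d2) huw') (mul_ne_zero d2 hqw)]
    ring
  have eu : u + q⁻¹ * z = (q * u + z) / q := by field_simp; try ring
  have ew : q⁻¹ * z + w = (q * w + z) / q := by field_simp; try ring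
  simp only [← div_div]
  rw [eu, ew, div_div_eq_mul_div, div_div_eq_mul_div]
  linear_combination (u - w)⁻¹ * KU - (u - w)⁻¹ * KW + r2 + r3 + r4
end
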